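/- Let M > 0, ε ∈ (0,1) and μ₁, μ₂ ∈ ℝ satisfy (1-ε)μ₁ + εμ₂ = 0 and max(μ₁², μ₂², |μ₁μ₂|) ≤ M²/4. Let f̃(x) = (1-ε)φ_G(x-μ₁) + ε·φ_G(x-μ₂). Then ∫_ℝ (f̃(x) - φ_G(x))²/φ_G(x) dx ≤ C²(M)·[ε(1-ε)(μ₂-μ₁)²]², where C²(M) = 1/2 + (2/3)·M²·e^{M²/4}. -/

import Mathlib

open MeasureTheory Filter Set

noncomputable section

/-- The measure on `ℝ` with Lebesgue density `f`. -/
def pdfMeasure (f : ℝ → ℝ) : Measure ℝ :=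
  MeasureTheory.volume.withDensity (fun x => ENNReal.ofReal (f x))

/-- The joint law of `n` i.i.d. observations with common density `f`. -/
def sampleMeasure (n : ℕ) (f : ℝ → ℝ) : Measure (Fin n → ℝ) :=
  Measure.pi (fun _ : Fin n => pdfMeasure f)

/-- The `k`-th order statistic (for `1 ≤ k ≤ n`) of the sample `ω`. -/
def oStat {n : ℕ} (k : ℕ) (ω : Fin n → ℝ) : ℝ :=
  if h : 1 ≤ k ∧ k ≤ n then ω (Tuple.sort ω ⟨k - 1, by omega⟩) else 0

/-- The spacing `X_{(n-k+1)} - X_{(k)}` of the order statistics. -/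
def spacing {n : ℕ} (k : ℕ) (ω : Fin n → ℝ) : ℝ :=
  oStat (n - k + 1) ω - oStat k ω

/-- `K_n = {2^j : 0 ≤ j ≤ ⌊log₂ (n/2)⌋}`. -/
def Kfin (n : ℕ) : Finset ℕ :=
  (Finset.range (Nat.log 2 (n / 2) + 1)).image (fun j => 2 ^ j)

/-- The `(1-u)`-quantile of the spacing `X_{(n-k+1)} - X_{(k)}` under the null
hypothesis (sample of density `φ`; under `H₀` this law does not depend on the
translation parameter). -/
def spacingQuantile (n : ℕ) (φ : ℝ → ℝ) (u : ℝ) (k : ℕ) : ℝ :=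
  sInf {t : ℝ | sampleMeasure n φ {ω | spacing k ω > t} ≤ ENNReal.ofReal u}

/-- The corrected level `α_n`. -/
def alphaN (n : ℕ) (φ : ℝ → ℝ) (α : ℝ) : ℝ :=
  sSup {u : ℝ | u ∈ Set.Ioo (0:ℝ) 1 ∧
    sampleMeasure n φ {ω | ∃ k ∈ Kfin n, spacing k ω > spacingQuantile n φ u k}
      ≤ ENNReal.ofReal α}

/-- The rejection region of the multiple spacing test `Ψ_α`. -/
def psiReject (n : ℕ) (φ : ℝ → ℝ) (α : ℝ) : Set (Fin n → ℝ) :=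
  {ω | ∃ k ∈ Kfin n, spacing k ω > spacingQuantile n φ (alphaN n φ α) k}

/-- The empirical (unbiased) variance `S_n²`. -/
def varStat {n : ℕ} (ω : Fin n → ℝ) : ℝ :=
  (∑ i, (ω i - (∑ j, ω j) / (n : ℝ)) ^ 2) / ((n : ℝ) - 1)

/-- The `(1-α)`-quantile of `S_n²` under the null hypothesis. -/
def varQuantile (n : ℕ) (φ : ℝ → ℝ) (α : ℝ) : ℝ :=
  sInf {t : ℝ | sampleMeasure n φ {ω | varStat ω > t} ≤ ENNReal.ofReal α}

/-- The standard Gaussian density. -/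
def phiG (x : ℝ) : ℝ := (Real.sqrt (2 * Real.pi))⁻¹ * Real.exp (-x ^ 2 / 2)

/-- A two-component Gaussian mixture density. -/
def mixG (ε μ₁ μ₂ : ℝ) : ℝ → ℝ := fun x => (1 - ε) * phiG (x - μ₁) + ε * phiG (x - μ₂)

/-- Survival function `Φ̄ = 1 - Φ` of the density `φ`. -/
def Phibar (φ : ℝ → ℝ) (u : ℝ) : ℝ := 1 - ∫ x in Set.Iic u, φ x

/-- The standard Laplace density. -/
def phiL (x : ℝ) : ℝ := (1 / 2) * Real.exp (-|x|)

/-- A two-component Laplace mixture density. -/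
def mixL (ε μ₁ μ₂ : ℝ) : ℝ → ℝ := fun x => (1 - ε) * phiL (x - μ₁) + ε * phiL (x - μ₂)

/-- The threshold `ρ(k,n) = k/n + (1 + √(1+2kβ))/(nβ)`. -/
def rhoKn (n k : ℕ) (β : ℝ) : ℝ :=
  ((k : ℝ) / (n : ℝ)) + (1 + Real.sqrt (1 + 2 * (k : ℝ) * β)) / ((n : ℝ) * β)

/-! Gaussian location densities multiply as `φ(x-a) φ(x-b) / φ(x) = e^{ab} φ(x-(a+b))`, so the
χ²-divergence of a mixture `∑ wᵢ φ(· - μᵢ)` from `φ` is `∑ wᵢ wⱼ e^{μᵢ μⱼ} - 1`. Bounding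
`e^a ≤ 1 + a + a² e^{|a|} / 2`, the constant terms sum to `1`, the linear terms to
`(∑ wᵢ μᵢ)² = 0`, and the quadratic terms to `(∑ wᵢ μᵢ²)² = (ε(1-ε)(μ₂-μ₁)²)²`; finally
`e^t / 2 ≤ 1/2 + t e^t / 2` because `e^t ≤ 1 + t e^t`. -/

open Real

open Nat in
lemma exp_le_one_add_add_sq_mul_exp_abs (x : ℝ) : exp x ≤ 1 + x + x ^ 2 / 2 * exp |x| := by
  have hexp : HasSum (fun n : ℕ => x ^ n / n !) (exp x) := by
    rw [exp_eq_exp_ℝ]; exact NormedSpace.expSeries_div_hasSum_exp x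
  have htail : HasSum (fun n : ℕ => x ^ (n + 2) / (n + 2)!) (exp x - 1 - x) := by
    rw [← hasSum_nat_add_iff' 2] at hexp
    simpa [Finset.sum_range_succ, sub_sub] using hexp
  have hdom : HasSum (fun n : ℕ => x ^ 2 / 2 * (|x| ^ n / n !)) (x ^ 2 / 2 * exp |x|) := by
    rw [exp_eq_exp_ℝ]; exact (NormedSpace.expSeries_div_hasSum_exp |x|).mul_left _
  suffices ∀ n : ℕ, x ^ (n + 2) / (n + 2)! ≤ x ^ 2 / 2 * (|x| ^ n / n !) by
    linarith [hasSum_le this htail hdom]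
  intro n
  have hfac : 2 * n ! ≤ (n + 2)! := by
    rw [factorial_succ, factorial_succ, ← mul_assoc]
    exact Nat.mul_le_mul_right _ (by nlinarith)
  calc x ^ (n + 2) / (n + 2)! ≤ |x| ^ (n + 2) / (n + 2)! :=
        div_le_div_of_nonneg_right ((le_abs_self _).trans_eq (abs_pow x _)) (by positivity)
    _ ≤ |x| ^ (n + 2) / (2 * n !) := by gcongr; exact_mod_cast hfac
    _ = x ^ 2 / 2 * (|x| ^ n / n !) := by rw [pow_add, sq_abs]; field_simp

lemma exp_le_one_add_add_sq_mul_exp {x t : ℝ} (hx : |x| ≤ t) :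
    exp x ≤ 1 + x + x ^ 2 / 2 * exp t := by
  have := exp_le_one_add_add_sq_mul_exp_abs x
  have : exp |x| ≤ exp t := exp_le_exp.2 hx
  nlinarith [sq_nonneg x]

lemma exp_le_one_add_mul_exp (t : ℝ) : exp t ≤ 1 + t * exp t := by
  have h := one_sub_le_exp_neg t
  have : exp t * exp (-t) = 1 := by rw [← exp_add, add_neg_cancel, exp_zero]
  nlinarith [exp_pos t]

theorem sum_sum_mul_exp_mul_le {ι : Type*} (s : Finset ι) (w μ : ι → ℝ) {t : ℝ}
    (hw : ∀ i ∈ s, 0 ≤ w i) (hw_sum : ∑ i ∈ s, w i = 1) (hmean : ∑ i ∈ s, w i * μ i = 0)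
    (ht : ∀ i ∈ s, ∀ j ∈ s, |μ i * μ j| ≤ t) :
    ∑ i ∈ s, ∑ j ∈ s, w i * w j * exp (μ i * μ j)
      ≤ 1 + exp t / 2 * (∑ i ∈ s, w i * μ i ^ 2) ^ 2 := by
  calc ∑ i ∈ s, ∑ j ∈ s, w i * w j * exp (μ i * μ j)
      ≤ ∑ i ∈ s, ∑ j ∈ s, w i * w j * (1 + μ i * μ j + (μ i * μ j) ^ 2 / 2 * exp t) :=
        Finset.sum_le_sum fun i hi => Finset.sum_le_sum fun j hj =>
          mul_le_mul_of_nonneg_left (exp_le_one_add_add_sq_mul_exp (ht i hi j hj))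
            (mul_nonneg (hw i hi) (hw j hj))
    _ = (∑ i ∈ s, w i) ^ 2 + (∑ i ∈ s, w i * μ i) ^ 2
          + exp t / 2 * (∑ i ∈ s, w i * μ i ^ 2) ^ 2 := by
        rw [sq (∑ i ∈ s, w i), sq (∑ i ∈ s, w i * μ i), sq (∑ i ∈ s, w i * μ i ^ 2),
          Finset.sum_mul_sum, Finset.sum_mul_sum, Finset.sum_mul_sum, Finset.mul_sum,
          ← Finset.sum_add_distrib, ← Finset.sum_add_distrib]
        refine Finset.sum_congr rfl fun i _ => ?_
        rw [Finset.mul_sum, ← Finset.sum_add_distrib, ← Finset.sum_add_distrib]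
        refine Finset.sum_congr rfl fun j _ => ?_
        ring
    _ = 1 + exp t / 2 * (∑ i ∈ s, w i * μ i ^ 2) ^ 2 := by
        rw [hw_sum, hmean]; ring

lemma phiG_sub_eq_gaussianPDFReal (a x : ℝ) :
    phiG (x - a) = ProbabilityTheory.gaussianPDFReal a 1 x := by
  simp [phiG, ProbabilityTheory.gaussianPDFReal]

lemma phiG_pos (x : ℝ) : 0 < phiG x := by
  unfold phiG; positivity

lemma integrable_phiG_sub (a : ℝ) : Integrable (fun x => phiG (x - a)) := by
  simpa only [phiG_sub_eq_gaussianPDFReal] using ProbabilityTheory.integrable_gaussianPDFReal a 1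

lemma integral_phiG_sub (a : ℝ) : ∫ x, phiG (x - a) = 1 := by
  simpa only [phiG_sub_eq_gaussianPDFReal] using
    ProbabilityTheory.integral_gaussianPDFReal_eq_one a one_ne_zero

lemma phiG_sub_mul_phiG_sub_div_phiG (a b x : ℝ) :
    phiG (x - a) * phiG (x - b) / phiG x = exp (a * b) * phiG (x - (a + b)) := by
  rw [div_eq_iff (phiG_pos x).ne']
  have hexp : exp (-(x - a) ^ 2 / 2) * exp (-(x - b) ^ 2 / 2)
      = exp (a * b) * (exp (-(x - (a + b)) ^ 2 / 2) * exp (-x ^ 2 / 2)) := by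
    simp only [← exp_add]; ring_nf
  simp only [phiG]
  linear_combination (√(2 * π))⁻¹ ^ 2 * hexp

lemma integral_phiG_sub_mul_phiG_sub_div_phiG (a b : ℝ) :
    ∫ x, phiG (x - a) * phiG (x - b) / phiG x = exp (a * b) := by
  simp_rw [phiG_sub_mul_phiG_sub_div_phiG, integral_const_mul, integral_phiG_sub, mul_one]

theorem integral_sum_phiG_sub_sq_div_phiG {ι : Type*} (s : Finset ι) (c a : ι → ℝ) :
    ∫ x, (∑ i ∈ s, c i * phiG (x - a i)) ^ 2 / phiG x
      = ∑ i ∈ s, ∑ j ∈ s, c i * c j * exp (a i * a j) := by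
  have hexpand : ∀ x, (∑ i ∈ s, c i * phiG (x - a i)) ^ 2 / phiG x
      = ∑ i ∈ s, ∑ j ∈ s, c i * c j * (phiG (x - a i) * phiG (x - a j) / phiG x) := by
    intro x
    rw [sq, Finset.sum_mul_sum, Finset.sum_div]
    refine Finset.sum_congr rfl fun i _ => ?_
    rw [Finset.sum_div]
    refine Finset.sum_congr rfl fun j _ => ?_
    ring
  have hint : ∀ i j,
      Integrable (fun x => c i * c j * (phiG (x - a i) * phiG (x - a j) / phiG x)) := by
    intro i j
    simp_rw [phiG_sub_mul_phiG_sub_div_phiG]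
    exact ((integrable_phiG_sub _).const_mul _).const_mul _
  simp_rw [hexpand]
  rw [integral_finsetSum _ fun i _ => integrable_finsetSum _ fun j _ => hint i j]
  refine Finset.sum_congr rfl fun i _ => ?_
  rw [integral_finsetSum _ fun j _ => hint i j]
  simp_rw [integral_const_mul, integral_phiG_sub_mul_phiG_sub_div_phiG]

lemma integral_mixG_sub_phiG_sq_div_phiG (ε μ₁ μ₂ : ℝ) :
    ∫ x, (mixG ε μ₁ μ₂ x - phiG x) ^ 2 / phiG x
      = ∑ i, ∑ j, ![1 - ε, ε] i * ![1 - ε, ε] j * exp (![μ₁, μ₂] i * ![μ₁, μ₂] j) - 1 := by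
  have h := integral_sum_phiG_sub_sq_div_phiG Finset.univ ![1 - ε, ε, -1] ![μ₁, μ₂, 0]
  simp only [Fin.sum_univ_three, Matrix.cons_val, sub_zero, mul_zero, zero_mul, exp_zero] at h
  simp only [mixG, Fin.sum_univ_two, Matrix.cons_val]
  convert h using 3 <;> ring

theorem stmt14_general (M ε μ₁ μ₂ : ℝ) (hε : ε ∈ Set.Ioo (0:ℝ) 1)
    (hmean : (1 - ε) * μ₁ + ε * μ₂ = 0)
    (hbound : max (max (μ₁ ^ 2) (μ₂ ^ 2)) |μ₁ * μ₂| ≤ M ^ 2 / 4) :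
    ∫ x, ((1 - ε) * phiG (x - μ₁) + ε * phiG (x - μ₂) - phiG x) ^ 2 / phiG x
      ≤ (1 / 2 + (2 / 3) * M ^ 2 * Real.exp (M ^ 2 / 4)) *
          (ε * (1 - ε) * (μ₂ - μ₁) ^ 2) ^ 2 := by
  obtain ⟨hε0, hε1⟩ := hε
  simp only [max_le_iff] at hbound
  obtain ⟨⟨hμ₁, hμ₂⟩, hμ₁₂⟩ := hbound
  have hpairs : ∀ i ∈ Finset.univ, ∀ j ∈ Finset.univ,
      |![μ₁, μ₂] i * ![μ₁, μ₂] j| ≤ M ^ 2 / 4 := by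
    simp only [Finset.mem_univ, forall_const, Fin.forall_fin_two, Matrix.cons_val, ← sq, abs_sq,
      mul_comm μ₂ μ₁]
    exact ⟨⟨hμ₁, hμ₁₂⟩, hμ₁₂, hμ₂⟩
  have hexp := sum_sum_mul_exp_mul_le Finset.univ ![1 - ε, ε] ![μ₁, μ₂]
    (by simp [Fin.forall_fin_two, hε0.le, hε1.le]) (by simp) (by simpa using hmean) hpairs
  have hvar : ∑ i, ![1 - ε, ε] i * ![μ₁, μ₂] i ^ 2 = ε * (1 - ε) * (μ₂ - μ₁) ^ 2 := by
    simp only [Fin.sum_univ_two, Matrix.cons_val]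
    linear_combination ((1 - ε) * μ₁ + ε * μ₂) * hmean
  have hconst : exp (M ^ 2 / 4) / 2 ≤ 1 / 2 + 2 / 3 * M ^ 2 * exp (M ^ 2 / 4) := by
    nlinarith [exp_le_one_add_mul_exp (M ^ 2 / 4), exp_pos (M ^ 2 / 4), sq_nonneg M]
  calc ∫ x, (mixG ε μ₁ μ₂ x - phiG x) ^ 2 / phiG x
      ≤ exp (M ^ 2 / 4) / 2 * (ε * (1 - ε) * (μ₂ - μ₁) ^ 2) ^ 2 := by
        rw [integral_mixG_sub_phiG_sq_div_phiG, ← hvar]; linarith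
    _ ≤ _ := by gcongr

/-- bound on the chi-square divergence for a centered Gaussian
mixture with small means. -/
theorem stmt14 (M ε μ₁ μ₂ : ℝ) (hM : 0 < M) (hε : ε ∈ Set.Ioo (0:ℝ) 1)
    (hmean : (1 - ε) * μ₁ + ε * μ₂ = 0)
    (hbound : max (max (μ₁ ^ 2) (μ₂ ^ 2)) |μ₁ * μ₂| ≤ M ^ 2 / 4) :
    ∫ x, ((1 - ε) * phiG (x - μ₁) + ε * phiG (x - μ₂) - phiG x) ^ 2 / phiG x
      ≤ (1 / 2 + (2 / 3) * M ^ 2 * Real.exp (M ^ 2 / 4)) *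
          (ε * (1 - ε) * (μ₂ - μ₁) ^ 2) ^ 2 :=
  stmt14_general M ε μ₁ μ₂ hε hmean hbound
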